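/- Every finite 2-edge-connected undirected graph admits a strongly connected orientation: each undirected edge can be assigned a direction so that the resulting digraph has a directed path between every ordered pair of vertices (Robbins' theorem). -/

import Mathlib

/-!
Grow a vertex set `S` together with an orientation of some edges inside `S` in which `S` is
strongly connected, starting from a single vertex. If `S ≠ V`, connectivity gives an edge `uy`
leaving `S`; as `uy` is not a bridge, a path from `y` to `u` avoids it, and cutting it at its
first return to `S` gives an ear `u → y → ⋯ → w`. Every edge of the ear has an endpoint outside
`S`, so none is oriented yet, and orienting the ear along itself makes `S ∪ ear` strongly
connected. Once `S = V`, the remaining edges are oriented arbitrarily.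
-/

open Relation

namespace SimpleGraph

variable {V : Type*} {G : SimpleGraph V}

namespace Walk

theorem reflTransGen_of_forall_darts {r : V → V → Prop} {u w : V} (p : G.Walk u w)
    (hp : ∀ d ∈ p.darts, r d.fst d.snd) ⦃x : V⦄ (hx : x ∈ p.support) :
    ReflTransGen r u x ∧ ReflTransGen r x w := by
  induction p generalizing x with
  | nil =>
    rw [support_nil, List.mem_singleton] at hx
    subst hx
    exact ⟨.refl, .refl⟩
  | @cons a c w hac q ih =>
    have hr : r a c := hp ⟨(a, c), hac⟩ (by simp)
    have hq : ∀ d ∈ q.darts, r d.fst d.snd := fun d hd => hp d (by simp [hd])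
    rcases List.mem_cons.1 (support_cons hac q ▸ hx) with rfl | hx
    · exact ⟨.refl, .head hr (ih hq q.start_mem_support).2⟩
    · exact ⟨.head hr (ih hq hx).1, (ih hq hx).2⟩

theorem IsTrail.symm_notMem_darts {u v : V} {p : G.Walk u v} (hp : p.IsTrail) {d : G.Dart}
    (hd : d ∈ p.darts) : d.symm ∉ p.darts := fun hd' =>
  d.symm_ne <| List.inj_on_of_nodup_map hp.edges_nodup hd' hd (Dart.edge_symm d)

theorem exists_walk_to_first_mem {S : Set V} {a b : V} (p : G.Walk a b) (hb : b ∈ S) :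
    ∃ w ∈ S, ∃ q : G.Walk a w, q.darts ⊆ p.darts ∧ ∀ d ∈ q.darts, d.fst ∉ S := by
  induction p with
  | nil => exact ⟨_, hb, nil, by simp, by simp⟩
  | @cons a c b hac p ih =>
    by_cases ha : a ∈ S
    · exact ⟨a, ha, nil, by simp, by simp⟩
    obtain ⟨w, hw, q, hqp, hqS⟩ := ih hb
    refine ⟨w, hw, cons hac q, List.cons_subset_cons _ hqp, ?_⟩
    simp only [darts_cons, List.mem_cons, forall_eq_or_imp]
    exact ⟨ha, hqS⟩

end Walk

structure IsStrongOrientationOn (G : SimpleGraph V) (S : Set V) (r : V → V → Prop) : Prop where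
  adj : ∀ ⦃u v⦄, r u v → G.Adj u v
  mem : ∀ ⦃u v⦄, r u v → u ∈ S ∧ v ∈ S
  asymm : ∀ ⦃u v⦄, r u v → ¬r v u
  reach : ∀ ⦃u v⦄, u ∈ S → v ∈ S → ReflTransGen r u v

namespace IsStrongOrientationOn

theorem singleton (v : V) : G.IsStrongOrientationOn {v} fun _ _ => False where
  adj _ _ := False.elim
  mem _ _ := False.elim
  asymm _ _ := False.elim
  reach u w hu hw := by rw [Set.mem_singleton_iff.1 hu, Set.mem_singleton_iff.1 hw]

theorem add_ear {S : Set V} {r : V → V → Prop} (h : G.IsStrongOrientationOn S r) {u w : V}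
    (p : G.Walk u w) (hp : p.IsTrail) (hu : u ∈ S) (hw : w ∈ S)
    (hout : ∀ d ∈ p.darts, d.fst ∉ S ∨ d.snd ∉ S) :
    G.IsStrongOrientationOn (S ∪ {x | x ∈ p.support})
      fun a b => r a b ∨ ∃ d ∈ p.darts, d.fst = a ∧ d.snd = b := by
  set r' : V → V → Prop := fun a b => r a b ∨ ∃ d ∈ p.darts, d.fst = a ∧ d.snd = b
  have hS : ∀ ⦃a b⦄, a ∈ S → b ∈ S → ReflTransGen r' a b := fun a b ha hb =>
    ReflTransGen.mono (fun _ _ => Or.inl) _ _ (h.reach ha hb)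
  have hp' := p.reflTransGen_of_forall_darts (r := r') fun d hd => Or.inr ⟨d, hd, rfl, rfl⟩
  have to_w : ∀ a ∈ S ∪ {x | x ∈ p.support}, ReflTransGen r' a w := by
    rintro a (ha | ha)
    exacts [hS ha hw, (hp' ha).2]
  have from_w : ∀ b ∈ S ∪ {x | x ∈ p.support}, ReflTransGen r' w b := by
    rintro b (hb | hb)
    exacts [hS hw hb, (hS hw hu).trans (hp' hb).1]
  refine ⟨?_, ?_, ?_, fun a b ha hb => (to_w a ha).trans (from_w b hb)⟩
  · rintro a b (hab | ⟨d, -, rfl, rfl⟩)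
    exacts [h.adj hab, d.adj]
  · rintro a b (hab | ⟨d, hd, rfl, rfl⟩)
    · exact ⟨Or.inl (h.mem hab).1, Or.inl (h.mem hab).2⟩
    · exact ⟨Or.inr (p.dart_fst_mem_support_of_mem_darts hd),
        Or.inr (p.dart_snd_mem_support_of_mem_darts hd)⟩
  · rintro a b (hab | ⟨d, hd, rfl, rfl⟩) (hba | ⟨d', hd', hb, ha⟩)
    · exact h.asymm hab hba
    · have := h.mem hab
      rcases hout d' hd' with h' | h' <;> simp_all
    · have := h.mem hba
      rcases hout d hd with h' | h' <;> simp_all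
    · have : d' = d.symm := Dart.ext _ _ (Prod.ext hb ha)
      exact hp.symm_notMem_darts hd (this ▸ hd')

end IsStrongOrientationOn

theorem exists_ear (hconn : G.Connected)
    (h2ec : ∀ e ∈ G.edgeSet, (G.deleteEdges {e}).Connected) {S : Set V} {v x : V}
    (hv : v ∈ S) (hx : x ∉ S) :
    ∃ u w, ∃ p : G.Walk u w, p.IsTrail ∧ u ∈ S ∧ w ∈ S ∧
      (∀ d ∈ p.darts, d.fst ∉ S ∨ d.snd ∉ S) ∧ ∃ y ∈ p.support, y ∉ S := by
  classical
  obtain ⟨d, -, hu, hy⟩ := (hconn.preconnected v x).some.exists_boundary_dart S hv hx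
  obtain ⟨q₀⟩ := (h2ec d.edge d.edge_mem).preconnected d.snd d.fst
  set q₁ : G.Walk d.snd d.fst := q₀.mapLe (G.deleteEdges_le _)
  have hq₁ : d.edge ∉ q₁.edges := fun h => by
    simp only [q₁, Walk.mapLe, Walk.edges_map, Hom.coe_ofLE, Sym2.map_id, List.map_id] at h
    simpa using q₀.edges_subset_edgeSet h
  obtain ⟨w, hw, q₂, hq₂, hq₂S⟩ := q₁.exists_walk_to_first_mem hu
  have hq : q₂.bypass.darts ⊆ q₁.darts := List.Subset.trans q₂.darts_bypass_subset_darts hq₂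
  refine ⟨d.fst, w, .cons d.adj q₂.bypass, ?_, hu, hw, ?_, d.snd, by simp, hy⟩
  · exact (Walk.isTrail_cons _ _).2
      ⟨q₂.bypass_isPath.isTrail, fun h => hq₁ (List.map_subset _ hq h)⟩
  · simp only [Walk.darts_cons, List.mem_cons, forall_eq_or_imp]
    exact ⟨Or.inr hy, fun d' hd' => Or.inl (hq₂S d' (q₂.darts_bypass_subset_darts hd'))⟩

theorem exists_isStrongOrientationOn_univ [Finite V] (hconn : G.Connected)
    (h2ec : ∀ e ∈ G.edgeSet, (G.deleteEdges {e}).Connected) :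
    ∃ r, G.IsStrongOrientationOn Set.univ r := by
  obtain ⟨v⟩ := hconn.nonempty
  obtain ⟨S, hvS, hS⟩ := (Set.toFinite {S : Set V | ∃ r, G.IsStrongOrientationOn S r}
    ).exists_le_maximal ⟨_, IsStrongOrientationOn.singleton v⟩
  obtain ⟨r, hr⟩ := hS.prop
  refine ⟨r, Set.eq_univ_of_forall (fun x => ?_) ▸ hr⟩
  by_contra hx
  obtain ⟨u, w, p, hp, hu, hw, hout, y, hy, hyS⟩ := exists_ear hconn h2ec (hvS rfl) hx
  exact hyS (hS.2 ⟨_, hr.add_ear p hp hu hw hout⟩ Set.subset_union_left (Or.inr hy))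

theorem exists_orientation_of_asymm {r : V → V → Prop} (hadj : ∀ ⦃u v⦄, r u v → G.Adj u v)
    (hasymm : ∀ ⦃u v⦄, r u v → ¬r v u) :
    ∃ r' : V → V → Prop, (∀ u v, r u v → r' u v) ∧ (∀ u v, r' u v → G.Adj u v) ∧
      ∀ u v, G.Adj u v → (r' u v ∨ r' v u) ∧ ¬(r' u v ∧ r' v u) := by
  refine ⟨fun a b => r a b ∨ (G.Adj a b ∧ ¬r b a ∧ WellOrderingRel a b),
    fun _ _ => Or.inl, fun _ _ h => h.elim (hadj ·) And.left, fun u v huv => ⟨?_, ?_⟩⟩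
  · by_cases hvu : r v u
    · exact Or.inr (Or.inl hvu)
    by_cases huv' : r u v
    · exact Or.inl (Or.inl huv')
    rcases trichotomous_of WellOrderingRel u v with h | rfl | h
    · exact Or.inl (Or.inr ⟨huv, hvu, h⟩)
    · exact absurd huv (G.irrefl)
    · exact Or.inr (Or.inr ⟨huv.symm, huv', h⟩)
  · rintro ⟨h₁ | h₁, h₂ | h₂⟩
    · exact hasymm h₁ h₂
    · exact h₂.2.1 h₁
    · exact h₁.2.1 h₂
    · exact asymm h₁.2.2 h₂.2.2

end SimpleGraph

/-- Robbins' theorem: every finite 2-edge-connected undirected graph admits a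
strongly connected orientation. -/
theorem robbins_strongly_connected_orientation {V : Type} [Fintype V]
    (G : SimpleGraph V) (hconn : G.Connected)
    (h2ec : ∀ e ∈ G.edgeSet, (G.deleteEdges {e}).Connected) :
    ∃ r : V → V → Prop,
      (∀ u v : V, r u v → G.Adj u v) ∧
      (∀ u v : V, G.Adj u v → (r u v ∨ r v u) ∧ ¬(r u v ∧ r v u)) ∧
      (∀ u v : V, Relation.ReflTransGen r u v) := by
  obtain ⟨r, hr⟩ := G.exists_isStrongOrientationOn_univ hconn h2ec
  obtain ⟨r', hle, hadj, horient⟩ := G.exists_orientation_of_asymm hr.adj hr.asymm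
  exact ⟨r', hadj, horient, fun u v => ReflTransGen.mono hle _ _ (hr.reach trivial trivial)⟩
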